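/- arXiv:math/0509421 — 6 statements merged into one kernel-verified Lean document; each statement's English description precedes it below -/
import Mathlib

section
/- Let A be an abelian power subgroup of a group G. Then a subgroup H with H ≤ A is a power subgroup of G if and only if H is a power subgroup of A. -/
/-- `G^m`: the subgroup generated by all `m`-th powers of elements of `G`. -/
def powerSubgroup (G : Type*) [Group G] (m : ℕ) : Subgroup G :=
  Subgroup.closure (Set.range fun g : G => g ^ m)

/-!
Let `A = G^l` be abelian. The `k`-th power map is then an endomorphism of `A`, so it sends
`A = ⟨g ^ l⟩` onto `⟨g ^ (l * k)⟩`: `A^k = G^(l * k)`, and every power subgroup of `A` is one of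
`G`. Conversely, if `G^m ≤ A` then `g ^ gcd m l ∈ A` for all `g`, and writing
`g ^ m = (g ^ gcd m l) ^ (m / gcd m l)` gives `G^m = G^(lcm m l) = A^(lcm m l / l)`.
-/

section PowerSubgroup

variable {G : Type*} [Group G] {l : ℕ}

lemma pow_mem_powerSubgroup (m : ℕ) (g : G) : g ^ m ∈ powerSubgroup G m :=
  Subgroup.subset_closure ⟨g, rfl⟩

lemma powerSubgroup_le_of_dvd {m n : ℕ} (h : m ∣ n) : powerSubgroup G n ≤ powerSubgroup G m := by
  obtain ⟨c, rfl⟩ := h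
  refine (Subgroup.closure_le _).2 ?_
  rintro - ⟨g, rfl⟩
  simpa only [SetLike.mem_coe, pow_mul] using Subgroup.pow_mem _ (pow_mem_powerSubgroup m g) c

lemma pow_gcd_mem {K : Subgroup G} {g : G} {m n : ℕ} (hm : g ^ m ∈ K) (hn : g ^ n ∈ K) :
    g ^ m.gcd n ∈ K := by
  have hgcd : g ^ (m.gcd n : ℤ) = (g ^ m) ^ m.gcdA n * (g ^ n) ^ m.gcdB n := by
    rw [← zpow_natCast g m, ← zpow_natCast g n, ← zpow_mul, ← zpow_mul, ← zpow_add,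
      Nat.gcd_eq_gcd_ab]
  rw [← zpow_natCast, hgcd]
  exact K.mul_mem (K.zpow_mem hm _) (K.zpow_mem hn _)

lemma pow_mem_powerSubgroup_mul (hcomm : ∀ a b : powerSubgroup G l, a * b = b * a)
    {x : G} (hx : x ∈ powerSubgroup G l) (k : ℕ) :
    x ^ k ∈ powerSubgroup G (l * k) := by
  induction hx using Subgroup.closure_induction with
  | mem x hx =>
    obtain ⟨g, rfl⟩ := hx
    rw [← pow_mul]
    exact pow_mem_powerSubgroup _ g
  | one => simpa only [one_pow] using Subgroup.one_mem _
  | mul x y hx hy hxk hyk =>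
    have hxy : Commute x y := congrArg Subtype.val (hcomm ⟨x, hx⟩ ⟨y, hy⟩)
    rw [hxy.mul_pow]
    exact Subgroup.mul_mem _ hxk hyk
  | inv x _ hxk =>
    rw [inv_pow]
    exact Subgroup.inv_mem _ hxk

lemma map_subtype_powerSubgroup_powerSubgroup
    (hcomm : ∀ a b : powerSubgroup G l, a * b = b * a) (k : ℕ) :
    (powerSubgroup (powerSubgroup G l) k).map (powerSubgroup G l).subtype =
      powerSubgroup G (l * k) := by
  apply le_antisymm
  · rw [Subgroup.map_le_iff_le_comap]
    refine (Subgroup.closure_le _).2 ?_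
    rintro - ⟨a, rfl⟩
    exact pow_mem_powerSubgroup_mul hcomm a.2 k
  · refine (Subgroup.closure_le _).2 ?_
    rintro - ⟨g, rfl⟩
    refine ⟨⟨g ^ l, pow_mem_powerSubgroup l g⟩ ^ k, pow_mem_powerSubgroup _ _, ?_⟩
    simp [pow_mul]

lemma subgroupOf_powerSubgroup_eq_iff (hcomm : ∀ a b : powerSubgroup G l, a * b = b * a)
    {H : Subgroup G} (hH : H ≤ powerSubgroup G l) (k : ℕ) :
    H.subgroupOf (powerSubgroup G l) = powerSubgroup (powerSubgroup G l) k ↔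
      H = powerSubgroup G (l * k) := by
  rw [← (Subgroup.map_injective (powerSubgroup G l).subtype_injective).eq_iff,
    Subgroup.map_subgroupOf_eq_of_le hH, map_subtype_powerSubgroup_powerSubgroup hcomm]

lemma powerSubgroup_eq_lcm_of_le (hcomm : ∀ a b : powerSubgroup G l, a * b = b * a) {m : ℕ}
    (hml : powerSubgroup G m ≤ powerSubgroup G l) :
    powerSubgroup G m = powerSubgroup G (m.lcm l) := by
  refine le_antisymm ((Subgroup.closure_le _).2 ?_)
    (powerSubgroup_le_of_dvd (Nat.dvd_lcm_left m l))
  rintro - ⟨g, rfl⟩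
  show g ^ m ∈ _
  have hgcd : g ^ m.gcd l ∈ powerSubgroup G l :=
    pow_gcd_mem (hml (pow_mem_powerSubgroup m g)) (pow_mem_powerSubgroup l g)
  have hlcm : m.lcm l = l * (m / m.gcd l) := by
    rw [Nat.lcm_eq_mul_div, mul_comm m, Nat.mul_div_assoc _ (Nat.gcd_dvd_left m l)]
  have hpow : g ^ m = (g ^ m.gcd l) ^ (m / m.gcd l) := by
    rw [← pow_mul, Nat.mul_div_cancel' (Nat.gcd_dvd_left m l)]
  rw [hlcm, hpow]
  exact pow_mem_powerSubgroup_mul hcomm hgcd _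

end PowerSubgroup

theorem power_subgroups_of_abelian_power_subgroup {G : Type*} [Group G]
    (A : Subgroup G) (hA : ∀ a b : A, a * b = b * a)
    (hApow : ∃ l : ℕ, A = powerSubgroup G l)
    (H : Subgroup G) (hHA : H ≤ A) :
    (∃ m : ℕ, H = powerSubgroup G m) ↔ (∃ m : ℕ, H.subgroupOf A = powerSubgroup A m) := by
  obtain ⟨l, rfl⟩ := hApow
  simp_rw [subgroupOf_powerSubgroup_eq_iff hA hHA]
  constructor
  · rintro ⟨m, rfl⟩
    refine ⟨m.lcm l / l, ?_⟩
    rw [Nat.mul_div_cancel' (Nat.dvd_lcm_right m l)]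
    exact powerSubgroup_eq_lcm_of_le hA hHA
  · rintro ⟨k, hk⟩
    exact ⟨l * k, hk⟩
end

section
/- If G is an infinite abelian group all of whose proper quotient groups (i.e., quotients by nontrivial subgroups) are finite, then G is infinite cyclic, i.e., isomorphic to the integers. -/
/-!
A nontrivial element of finite order would generate a finite subgroup of finite
index in the infinite group `G`, so `G` is torsion-free. Fix `g ≠ 1` and let `m` be the (finite)
index of `⟨g⟩`. Then `x ↦ x ^ m` is an injective homomorphism of `G` into the cyclic group `⟨g⟩`,
so `G` is cyclic, and an infinite cyclic group is isomorphic to `ℤ`.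
-/

open Subgroup

lemma orderOf_eq_zero_of_finite_quotient_zpowers {G : Type*} [Group G] [Infinite G] (x : G)
    [Finite (G ⧸ zpowers x)] : orderOf x = 0 := by
  have hcard : orderOf x * (zpowers x).index = 0 := by
    rw [← Nat.card_zpowers, card_mul_index, Nat.card_eq_zero_of_infinite]
  exact (mul_eq_zero.mp hcard).resolve_right index_ne_zero_of_finite

lemma isMulTorsionFree_of_forall_finite_quotient_zpowers {G : Type*} [CommGroup G] [Infinite G]
    (h : ∀ x : G, x ≠ 1 → Finite (G ⧸ zpowers x)) : IsMulTorsionFree G :=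
  IsMulTorsionFree.of_not_isOfFinOrder fun x hx ↦ by
    have := h x hx
    exact orderOf_eq_zero_iff.mp (orderOf_eq_zero_of_finite_quotient_zpowers x)

lemma isCyclic_of_isCyclic_of_finite_quotient {G : Type*} [CommGroup G] [IsMulTorsionFree G]
    (H : Subgroup G) [IsCyclic H] [Finite (G ⧸ H)] : IsCyclic G :=
  isCyclic_of_injective ((powMonoidHom H.index).codRestrict H H.pow_index_mem)
    fun _ _ hxy ↦ pow_left_injective index_ne_zero_of_finite (congrArg Subtype.val hxy)

theorem infinite_cyclic_of_proper_quotients_finite {G : Type*} [CommGroup G] [Infinite G]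
    (h : ∀ N : Subgroup G, N ≠ ⊥ → Finite (G ⧸ N)) :
    Nonempty (G ≃* Multiplicative ℤ) := by
  have hzpowers : ∀ x : G, x ≠ 1 → Finite (G ⧸ zpowers x) := fun x hx ↦
    h _ (zpowers_ne_bot.mpr hx)
  have := isMulTorsionFree_of_forall_finite_quotient_zpowers hzpowers
  obtain ⟨g, hg⟩ := exists_ne (1 : G)
  have := hzpowers g hg
  have := isCyclic_of_isCyclic_of_finite_quotient (zpowers g)
  exact ⟨intCyclicMulEquiv.symm⟩
end

section
/- Let G be a group with only finitely many non-power subgroups, and suppose G is torsion-free (no nontrivial elements of finite order). Then every nontrivial subgroup H of G contains a nontrivial subgroup which is a power subgroup of G, or H is itself a power subgroup of G. -/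
/-!
A nontrivial element `g` of a torsion-free group has infinite order, so the cyclic subgroups
`⟨gⁿ⟩`, `n ≥ 1`, are nontrivial and pairwise distinct (`⟨gᵃ⟩ = ⟨gᵇ⟩` forces `a ∣ b` and `b ∣ a`).
They all lie in any subgroup containing `g`, and since only finitely many subgroups are not power
subgroups, one of them is a power subgroup.
-/

theorem Subgroup.injective_zpowers_pow {G : Type*} [Group G] {g : G} (hg : ¬IsOfFinOrder g) :
    Function.Injective fun n : ℕ => Subgroup.zpowers (g ^ n) := by
  have hinj : Function.Injective fun k : ℤ => g ^ k := injective_zpow_iff_not_isOfFinOrder.mpr hg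
  have dvd_of_le : ∀ a b : ℕ, Subgroup.zpowers (g ^ a) ≤ Subgroup.zpowers (g ^ b) → b ∣ a := by
    intro a b hle
    obtain ⟨k, hk⟩ := Subgroup.mem_zpowers_iff.mp (hle (Subgroup.mem_zpowers (g ^ a)))
    have hab : (b : ℤ) * k = a := hinj (by simpa [zpow_mul] using hk)
    exact Int.natCast_dvd_natCast.mp ⟨k, hab.symm⟩
  intro a b hab
  exact Nat.dvd_antisymm (dvd_of_le b a hab.ge) (dvd_of_le a b hab.le)

theorem exists_mem_eq_powerSubgroup_of_infinite {G : Type*} [Group G]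
    (h : {H : Subgroup G | ∀ m : ℕ, H ≠ powerSubgroup G m}.Finite) {S : Set (Subgroup G)}
    (hS : S.Infinite) : ∃ K ∈ S, ∃ m : ℕ, K = powerSubgroup G m := by
  obtain ⟨K, hKS, hK⟩ := hS.exists_notMem_finite h
  simp only [Set.mem_ofPred_eq, not_forall, not_not] at hK
  exact ⟨K, hKS, hK⟩

theorem torsionfree_subgroup_contains_power_subgroup {G : Type*} [Group G]
    (htf : ∀ g : G, g ≠ 1 → ¬IsOfFinOrder g)
    (h : {H : Subgroup G | ∀ m : ℕ, H ≠ powerSubgroup G m}.Finite) :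
    ∀ H : Subgroup G, H ≠ ⊥ →
      (∃ K : Subgroup G, K ≠ ⊥ ∧ K ≤ H ∧ ∃ m : ℕ, K = powerSubgroup G m) ∨
        (∃ m : ℕ, H = powerSubgroup G m) := by
  intro H hH
  left
  obtain ⟨g, hgH, hg⟩ := H.bot_or_exists_ne_one.resolve_left hH
  have hinj := Subgroup.injective_zpowers_pow (htf g hg)
  obtain ⟨_, ⟨n, rfl⟩, m, hm⟩ := exists_mem_eq_powerSubgroup_of_infinite h
    (Set.infinite_range_of_injective (hinj.comp Nat.succ_injective))
  refine ⟨_, ?_, ?_, m, hm⟩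
  · simpa using hinj.ne (Nat.succ_ne_zero n)
  · exact Subgroup.zpowers_le.mpr (H.pow_mem hgH _)
end

section
/- Let G be a group with only finitely many non-power subgroups H_1, ..., H_s (s ≥ 1), and suppose every non-power subgroup has finitely many conjugates. Then K = ⋂_{i=1}^s ⋂_{g ∈ G} g⁻¹ N_G(H_i) g is a normal subgroup of finite index in G in which every subgroup is normal (K is a Dedekind group). -/
section

open Subgroup Pointwise

variable {G : Type*} [Group G]

instance powerSubgroup_characteristic (m : ℕ) : (powerSubgroup G m).Characteristic := by
  refine characteristic_iff_map_le.mpr fun φ => ?_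
  rw [powerSubgroup, MonoidHom.map_closure]
  refine closure_mono ?_
  rintro _ ⟨_, ⟨x, rfl⟩, rfl⟩
  exact ⟨φ x, (map_pow φ x m).symm⟩

lemma iInf_map_conj_inv_eq_normalCore (A : Subgroup G) :
    ⨅ g : G, A.map (MulAut.conj g⁻¹).toMonoidHom = A.normalCore := by
  rw [normalCore_eq_iInf_map_conj, ← (Equiv.inv G).iInf_comp]
  simp

lemma toConjAct_smul_eq_map_conj (A : Subgroup G) (g : G) :
    ConjAct.toConjAct g • A = A.map (MulAut.conj g).toMonoidHom := by
  ext x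
  simp only [mem_pointwise_smul_iff_inv_smul_mem, ← ConjAct.toConjAct_inv,
    ConjAct.toConjAct_smul, inv_inv, mem_map_equiv, MulAut.conj_symm_apply]

lemma index_normalizer_eq_ncard_conjugates (A : Subgroup G) :
    (normalizer (A : Set G)).index =
      {L : Subgroup G | ∃ g : G, L = A.map (MulAut.conj g).toMonoidHom}.ncard := by
  have hstab : (MulAction.stabilizer (ConjAct G) A).comap
      ((ConjAct.toConjAct : G ≃* ConjAct G) : G →* ConjAct G) = normalizer (A : Set G) := by
    ext g
    simp [conjAct_pointwise_smul_iff]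
  have horbit : MulAction.orbit (ConjAct G) A =
      {L : Subgroup G | ∃ g : G, L = A.map (MulAut.conj g).toMonoidHom} := by
    ext L
    simp only [MulAction.mem_orbit_iff, ConjAct.toConjAct.surjective.exists,
      toConjAct_smul_eq_map_conj, Set.mem_ofPred_eq, eq_comm]
  rw [← hstab, index_comap_of_surjective _ ConjAct.toConjAct.surjective,
    MulAction.index_stabilizer, horbit]

lemma finiteIndex_normalizer_of_finite_conjugates {A : Subgroup G}
    (h : {L : Subgroup G | ∃ g : G, L = A.map (MulAut.conj g).toMonoidHom}.Finite) :
    (normalizer (A : Set G)).FiniteIndex :=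
  ⟨by
    rw [index_normalizer_eq_ncard_conjugates]
    exact (Set.ncard_pos h).mpr ⟨A, 1, by ext; simp⟩ |>.ne'⟩

lemma normal_of_le_normalizer {K : Subgroup G}
    (hK : ∀ M : Subgroup G, K ≤ normalizer (M : Set G)) (L : Subgroup K) : L.Normal := by
  have hL : (L.map K.subtype).subgroupOf K = L :=
    comap_map_eq_self_of_injective K.subtype_injective L
  rw [← hL, normal_subgroupOf_iff_le_normalizer (map_subtype_le L)]
  exact hK _

end

theorem dedekind_kernel_of_finitely_many_nonpower_general {G : Type*} [Group G]
    (s : ℕ) (H : Fin s → Subgroup G)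
    (hH : ∀ K : Subgroup G, (∀ m : ℕ, K ≠ powerSubgroup G m) ↔ ∃ i, K = H i)
    (hconj : ∀ i, {L : Subgroup G |
        ∃ g : G, L = (H i).map (MulAut.conj g).toMonoidHom}.Finite) :
    (⨅ i, ⨅ g : G, (Subgroup.normalizer (H i)).map (MulAut.conj g⁻¹).toMonoidHom).Normal ∧
      (⨅ i, ⨅ g : G,
          (Subgroup.normalizer (H i)).map (MulAut.conj g⁻¹).toMonoidHom).FiniteIndex ∧
      ∀ L : Subgroup ↥
          (⨅ i, ⨅ g : G, (Subgroup.normalizer (H i)).map (MulAut.conj g⁻¹).toMonoidHom),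
        L.Normal := by
  have hK : ⨅ i, ⨅ g : G,
      (Subgroup.normalizer (H i : Set G)).map (MulAut.conj g⁻¹).toMonoidHom =
        ⨅ i, (Subgroup.normalizer (H i : Set G)).normalCore := by
    simp only [iInf_map_conj_inv_eq_normalCore]
  rw [hK]
  have (i : Fin s) : (Subgroup.normalizer (H i : Set G)).FiniteIndex :=
    finiteIndex_normalizer_of_finite_conjugates (hconj i)
  have hle (M : Subgroup G) :
      ⨅ i, (Subgroup.normalizer (H i : Set G)).normalCore ≤ Subgroup.normalizer M := by
    by_cases hM : ∃ m, M = powerSubgroup G m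
    · obtain ⟨m, rfl⟩ := hM
      rw [Subgroup.normalizer_eq_top_iff.mpr inferInstance]
      exact le_top
    · push Not at hM
      obtain ⟨i, rfl⟩ := (hH M).mp hM
      exact (iInf_le _ i).trans (Subgroup.normalCore_le _)
  exact ⟨Subgroup.normal_iInf_normal fun _ => Subgroup.normalCore_normal _,
    Subgroup.finiteIndex_iInf fun _ => inferInstance, normal_of_le_normalizer hle⟩

theorem dedekind_kernel_of_finitely_many_nonpower {G : Type*} [Group G]
    (s : ℕ) (hs : 1 ≤ s) (H : Fin s → Subgroup G)
    (hH : ∀ K : Subgroup G, (∀ m : ℕ, K ≠ powerSubgroup G m) ↔ ∃ i, K = H i)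
    (hconj : ∀ i, {L : Subgroup G |
        ∃ g : G, L = (H i).map (MulAut.conj g).toMonoidHom}.Finite) :
    (⨅ i, ⨅ g : G, (Subgroup.normalizer (H i)).map (MulAut.conj g⁻¹).toMonoidHom).Normal ∧
      (⨅ i, ⨅ g : G,
          (Subgroup.normalizer (H i)).map (MulAut.conj g⁻¹).toMonoidHom).FiniteIndex ∧
      ∀ L : Subgroup ↥
          (⨅ i, ⨅ g : G, (Subgroup.normalizer (H i)).map (MulAut.conj g⁻¹).toMonoidHom),
        L.Normal :=
  dedekind_kernel_of_finitely_many_nonpower_general s H hH hconj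
end

section
/- Let G be a group with infinite cyclic subgroup Z = ⟨x⟩ normal in G, and let y ∈ G satisfy y⁻¹xy = x⁻¹ with x ≠ x⁻¹. Then the subgroups Y_i = ⟨x^{-i} y x^i⟩ for i = 1, 2, ... are pairwise distinct; hence G has infinitely many distinct conjugates of ⟨y⟩. -/
/-!
Since `y` inverts `x`, conjugating `y` by `x ^ k` gives `x ^ (-2 * k) * y`. If `Y_i = Y_j`, then the
generators `x ^ (-2 * i) * y` and `x ^ (-2 * j) * y` commute; moving `y` past a power of `x` inverts
it, so commuting forces `x ^ (4 * (j - i)) = 1`, and as `x` has infinite order, `i = j`. The `Y_i`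
are conjugates of `⟨y⟩`, so there are infinitely many of those.
-/

open Subgroup Function

section

variable {G : Type*} [Group G] {x y : G}

theorem semiconjBy_inv_of_inv_mul_mul_eq_inv (h : y⁻¹ * x * y = x⁻¹) : SemiconjBy y x x⁻¹ := by
  have h' : SemiconjBy y x⁻¹ x := by
    rw [SemiconjBy, ← h]
    group
  simpa using h'.inv_right

theorem SemiconjBy.inv_zpow_mul_mul_zpow (h : SemiconjBy y x x⁻¹) (k : ℤ) :
    (x ^ k)⁻¹ * y * x ^ k = x ^ (-2 * k) * y := by
  rw [mul_assoc, (h.zpow_right k).eq, inv_zpow']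
  group

theorem SemiconjBy.eq_of_commute_zpow_mul (h : SemiconjBy y x x⁻¹) (hx : ¬IsOfFinOrder x)
    {a b : ℤ} (hab : Commute (x ^ a * y) (x ^ b * y)) : a = b := by
  have hprod (c d : ℤ) : x ^ c * y * (x ^ d * y) = x ^ (c - d) * y * y := by
    rw [mul_assoc, ← mul_assoc y, (h.zpow_right d).eq, inv_zpow']
    group
  have hpow : x ^ (a - b) = x ^ (b - a) := by
    simpa only [hprod, mul_left_inj] using hab.eq
  have := injective_zpow_iff_not_isOfFinOrder.mpr hx hpow
  omega

theorem commute_of_zpowers_eq {g h : G} (e : zpowers g = zpowers h) : Commute g h := by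
  have hg : g ∈ zpowers h := e ▸ mem_zpowers g
  obtain ⟨k, rfl⟩ := mem_zpowers_iff.mp hg
  exact Commute.zpow_self h k

theorem SemiconjBy.injective_zpowers_inv_zpow_mul_mul_zpow (h : SemiconjBy y x x⁻¹)
    (hx : ¬IsOfFinOrder x) : Injective fun i : ℤ => zpowers ((x ^ i)⁻¹ * y * x ^ i) := by
  intro i j e
  have hc := commute_of_zpowers_eq e
  simp only [h.inv_zpow_mul_mul_zpow] at hc
  have := h.eq_of_commute_zpow_mul hx hc
  omega

end

theorem conjugates_pairwise_distinct_general {G : Type*} [Group G] (x y : G)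
    (hx : ¬IsOfFinOrder x)
    (hy : y⁻¹ * x * y = x⁻¹) :
    Function.Injective
        (fun i : ℕ => Subgroup.zpowers ((x ^ (i : ℤ))⁻¹ * y * x ^ (i : ℤ))) ∧
      {K : Subgroup G |
        ∃ g : G, K = (Subgroup.zpowers y).map (MulAut.conj g).toMonoidHom}.Infinite := by
  have hinj : Injective fun i : ℕ => zpowers ((x ^ (i : ℤ))⁻¹ * y * x ^ (i : ℤ)) :=
    ((semiconjBy_inv_of_inv_mul_mul_eq_inv hy).injective_zpowers_inv_zpow_mul_mul_zpow hx).comp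
      Nat.cast_injective
  refine ⟨hinj, Set.infinite_of_injective_forall_mem hinj fun i => ⟨(x ^ (i : ℤ))⁻¹, ?_⟩⟩
  rw [MonoidHom.map_zpowers]
  simp only [MulEquiv.coe_toMonoidHom, MulAut.conj_apply, inv_inv]

theorem conjugates_pairwise_distinct {G : Type*} [Group G] (x y : G)
    (hx : ¬IsOfFinOrder x) (hZ : (Subgroup.zpowers x).Normal)
    (hy : y⁻¹ * x * y = x⁻¹) (hxx : x ≠ x⁻¹) :
    Function.Injective
        (fun i : ℕ => Subgroup.zpowers ((x ^ (i : ℤ))⁻¹ * y * x ^ (i : ℤ))) ∧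
      {K : Subgroup G |
        ∃ g : G, K = (Subgroup.zpowers y).map (MulAut.conj g).toMonoidHom}.Infinite :=
  conjugates_pairwise_distinct_general x y hx hy
end

section
/- The quaternion group Q₈ of order 8 has exactly 3 non-power subgroups, namely its three cyclic subgroups of order 4. -/
/-!
In `Q₈` every element has order dividing 4, so `Q₈^m` only depends on `m mod 4`: it is trivial
for `m ≡ 0`, everything for odd `m`, and the centre `{1, -1}` for `m ≡ 2`. Since `-1` is the
only involution, the centre is the only subgroup of order 2; so by Lagrange the non-power
subgroups are exactly those of order 4. Such a subgroup contains an element `g` with `g² ≠ 1`,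
which has order 4, hence it is `⟨g⟩`, one of `⟨i⟩`, `⟨j⟩`, `⟨k⟩`.
In Mathlib's presentation of `Q₈ = QuaternionGroup 2`: `-1 = a 2`, `i = a 1`, `j = xa 0`,
`k = xa 1`.
-/

open Subgroup QuaternionGroup

section PowerSubgroup

variable {G : Type*} [Group G]

theorem powerSubgroup_zero : powerSubgroup G 0 = ⊥ := by
  simp [powerSubgroup, Set.range_const]

theorem powerSubgroup_mod_exponent (m : ℕ) :
    powerSubgroup G (m % Monoid.exponent G) = powerSubgroup G m := by
  simp only [powerSubgroup, ← Monoid.pow_eq_mod_exponent]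

theorem powerSubgroup_eq_top_of_coprime {m : ℕ} (h : (Nat.card G).Coprime m) :
    powerSubgroup G m = ⊤ := by
  refine eq_top_iff.2 fun g _ => subset_closure ⟨(powCoprime h).symm g, ?_⟩
  exact (powCoprime h).apply_symm_apply g

end PowerSubgroup

theorem zpowers_ne_zpowers_of_mul_ne_mul {G : Type*} [Group G] {x y : G}
    (h : x * y ≠ y * x) : zpowers x ≠ zpowers y := by
  intro hxy
  obtain ⟨k, rfl⟩ := mem_zpowers_iff.1 (hxy ▸ mem_zpowers y)
  exact h ((Commute.refl x).zpow_right k).eq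

local notation "Q₈" => QuaternionGroup 2

namespace QuaternionGroup

theorem natCard_two : Nat.card Q₈ = 8 := by
  rw [Nat.card_eq_fintype_card, card]

theorem exponent_two : Monoid.exponent Q₈ = 4 := by
  rw [exponent]; rfl

theorem sq_eq_one_iff (g : Q₈) : g ^ 2 = 1 ↔ g = 1 ∨ g = a 2 := by
  revert g; decide

theorem range_sq : (Set.range fun g : Q₈ => g ^ 2) = {1, a 2} := by
  ext x
  simp only [Set.mem_range, Set.mem_insert_iff, Set.mem_singleton_iff]
  revert x; decide

theorem natCard_zpowers_a_two : Nat.card (zpowers (a 2 : Q₈)) = 2 := by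
  rw [Nat.card_zpowers, orderOf_a]; rfl

theorem powerSubgroup_two : powerSubgroup Q₈ 2 = zpowers (a 2) := by
  rw [powerSubgroup, range_sq, closure_insert_one, zpowers_eq_closure]

theorem powerSubgroup_eq_top_of_odd {m : ℕ} (hm : Odd m) : powerSubgroup Q₈ m = ⊤ :=
  powerSubgroup_eq_top_of_coprime <| by
    rw [natCard_two]; exact (Nat.coprime_two_left.2 hm).pow_left 3

theorem powerSubgroup_cases (m : ℕ) :
    powerSubgroup Q₈ m = ⊥ ∨ powerSubgroup Q₈ m = zpowers (a 2) ∨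
      powerSubgroup Q₈ m = ⊤ := by
  rw [← powerSubgroup_mod_exponent, exponent_two]
  have : m % 4 < 4 := Nat.mod_lt _ four_pos
  interval_cases m % 4
  · exact Or.inl powerSubgroup_zero
  · exact Or.inr (Or.inr (powerSubgroup_eq_top_of_odd odd_one))
  · exact Or.inr (Or.inl powerSubgroup_two)
  · exact Or.inr (Or.inr (powerSubgroup_eq_top_of_odd (by decide)))

theorem le_zpowers_a_two_of_sq_eq_one {H : Subgroup Q₈} (h : ∀ g ∈ H, g ^ 2 = 1) :
    H ≤ zpowers (a 2) := by
  intro g hg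
  rcases (sq_eq_one_iff g).1 (h g hg) with rfl | rfl
  · exact one_mem _
  · exact mem_zpowers _

theorem eq_zpowers_a_two_of_natCard_eq_two {H : Subgroup Q₈} (h : Nat.card H = 2) :
    H = zpowers (a 2) :=
  eq_of_le_of_card_ge
    (le_zpowers_a_two_of_sq_eq_one fun g hg =>
      orderOf_dvd_iff_pow_eq_one.1 ((H.orderOf_dvd_natCard hg).trans h.dvd))
    (by rw [h, natCard_zpowers_a_two])

theorem orderOf_eq_four_of_sq_ne_one {g : Q₈} (hg : g ^ 2 ≠ 1) : orderOf g = 4 :=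
  orderOf_eq_prime_pow (p := 2) (n := 1) hg (by revert g; decide)

theorem exists_eq_zpowers_of_natCard_eq_four {H : Subgroup Q₈} (h : Nat.card H = 4) :
    ∃ g : Q₈, g ^ 2 ≠ 1 ∧ H = zpowers g := by
  obtain ⟨g, hgH, hg⟩ : ∃ g ∈ H, g ^ 2 ≠ 1 := by
    by_contra! hsq
    have := card_le_of_le (le_zpowers_a_two_of_sq_eq_one hsq)
    rw [h, natCard_zpowers_a_two] at this
    omega
  refine ⟨g, hg, (eq_of_le_of_card_ge (zpowers_le.2 hgH) ?_).symm⟩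
  rw [h, Nat.card_zpowers, orderOf_eq_four_of_sq_ne_one hg]

theorem zpowers_eq_of_sq_ne_one {g : Q₈} (hg : g ^ 2 ≠ 1) :
    zpowers g = zpowers (a 1) ∨ zpowers g = zpowers (xa 0) ∨ zpowers g = zpowers (xa 1) := by
  have : g = a 1 ∨ g = (a 1)⁻¹ ∨ g = xa 0 ∨ g = (xa 0)⁻¹ ∨ g = xa 1 ∨
      g = (xa 1)⁻¹ := by
    revert g; decide
  rcases this with rfl | rfl | rfl | rfl | rfl | rfl <;> simp only [zpowers_inv, true_or, or_true]

theorem natCard_eq_four_iff_forall_ne_powerSubgroup (H : Subgroup Q₈) :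
    Nat.card H = 4 ↔ ∀ m : ℕ, H ≠ powerSubgroup Q₈ m := by
  constructor
  · rintro h m rfl
    rcases powerSubgroup_cases m with hm | hm | hm <;> rw [hm] at h
    · rw [card_bot] at h; omega
    · rw [natCard_zpowers_a_two] at h; omega
    · rw [card_top, natCard_two] at h; omega
  · intro hnp
    have hdvd : Nat.card H ∣ 2 ^ 3 := (card_subgroup_dvd_card H).trans natCard_two.dvd
    obtain ⟨k, hk, hcard⟩ := (Nat.dvd_prime_pow Nat.prime_two).1 hdvd
    interval_cases k
    · exact (hnp 0 ((card_eq_one.1 hcard).trans powerSubgroup_zero.symm)).elim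
    · exact (hnp 2 ((eq_zpowers_a_two_of_natCard_eq_two hcard).trans
        powerSubgroup_two.symm)).elim
    · exact hcard
    · exact (hnp 1 ((eq_top_of_card_eq H (hcard.trans natCard_two.symm)).trans
        (powerSubgroup_eq_top_of_odd odd_one).symm)).elim

theorem natCard_eq_four_iff_eq_zpowers (H : Subgroup Q₈) :
    Nat.card H = 4 ↔ H = zpowers (a 1) ∨ H = zpowers (xa 0) ∨ H = zpowers (xa 1) := by
  constructor
  · intro h
    obtain ⟨g, hg, rfl⟩ := exists_eq_zpowers_of_natCard_eq_four h
    exact zpowers_eq_of_sq_ne_one hg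
  · rintro (rfl | rfl | rfl) <;>
      exact (Nat.card_zpowers _).trans (orderOf_eq_four_of_sq_ne_one (by decide))

end QuaternionGroup

theorem quaternion_nonpower_subgroups :
    {H : Subgroup (QuaternionGroup 2) | ∀ m : ℕ, H ≠ powerSubgroup (QuaternionGroup 2) m} =
      {H : Subgroup (QuaternionGroup 2) | IsCyclic H ∧ Nat.card H = 4} ∧
    {H : Subgroup (QuaternionGroup 2) |
      ∀ m : ℕ, H ≠ powerSubgroup (QuaternionGroup 2) m}.ncard = 3 := by
  have hcyclic : ∀ H : Subgroup Q₈, Nat.card H = 4 → IsCyclic H := fun H h => by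
    obtain ⟨g, -, rfl⟩ := exists_eq_zpowers_of_natCard_eq_four h
    infer_instance
  have hnonpower : {H : Subgroup Q₈ | ∀ m : ℕ, H ≠ powerSubgroup Q₈ m} =
      {zpowers (a 1), zpowers (xa 0), zpowers (xa 1)} := by
    ext H
    simp only [Set.mem_ofPred_eq, Set.mem_insert_iff, Set.mem_singleton_iff]
    rw [← natCard_eq_four_iff_forall_ne_powerSubgroup, natCard_eq_four_iff_eq_zpowers]
  refine ⟨?_, ?_⟩
  · ext H
    simp only [Set.mem_ofPred_eq]
    rw [← natCard_eq_four_iff_forall_ne_powerSubgroup]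
    exact ⟨fun h => ⟨hcyclic H h, h⟩, And.right⟩
  · rw [hnonpower, Set.ncard_eq_three]
    exact ⟨_, _, _, zpowers_ne_zpowers_of_mul_ne_mul (by decide),
      zpowers_ne_zpowers_of_mul_ne_mul (by decide),
      zpowers_ne_zpowers_of_mul_ne_mul (by decide), rfl⟩
end
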